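/- arXiv:2412.05144 — 6 statements merged into one kernel-verified Lean document; each statement's English description precedes it below -/
import Mathlib

section
/- Let 1 ≤ p ≤ n and let Q ∈ ℝ^{n×p} have orthonormal columns. Then there exists a subset I ⊆ {1, …, n} with |I| = p such that the p×p submatrix Q_I of Q formed by the rows indexed by I satisfies σ_min(Q_I) ≥ 1/√(p(n−p) + min(p, n−p)), where σ_min denotes the smallest singular value. -/
/-!
Choose `p` rows of `Q` whose `p × p` submatrix `A` has maximal `|det|` (it is nonzero because the
rows of `Q` span `ℝ^p`). By Cramer's rule every row `r` of `Q` is `c A` with all `|cₖ| ≤ 1`, so each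
entry of `Q x` outside the chosen rows is at most `√p ‖A x‖` in absolute value. Since
`‖Q x‖ = ‖x‖`, summing over the `n - p` remaining rows gives `‖x‖² ≤ (p (n - p) + 1) ‖A x‖²`.
-/

open Matrix Finset

theorem Fintype.sum_le_sum_comp_add_of_injective {ι κ M : Type*} [Fintype ι] [Fintype κ]
    [DecidableEq ι] [AddCommMonoid M] [Preorder M] [AddLeftMono M] {e : κ → ι}
    (he : Function.Injective e) {f : ι → M} {B : M} (hB : ∀ i, f i ≤ B) :
    ∑ i, f i ≤ ∑ k, f (e k) + (Fintype.card ι - Fintype.card κ) • B := by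
  rw [← sum_add_sum_compl (univ.image e), sum_image he.injOn]
  gcongr ∑ k, f (e k) + ?_
  calc ∑ i ∈ (univ.image e)ᶜ, f i ≤ #(univ.image e)ᶜ • B := sum_le_card_nsmul _ _ _ fun i _ => hB i
    _ = (Fintype.card ι - Fintype.card κ) • B := by
      rw [card_compl, card_image_of_injective _ he, card_univ]

theorem Nat.mul_sub_add_min_eq_zero_or_le (p n : ℕ) :
    p * (n - p) + min p (n - p) = 0 ∨ p * (n - p) + 1 ≤ p * (n - p) + min p (n - p) := by
  rcases Nat.eq_zero_or_pos (min p (n - p)) with h | h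
  · left
    rcases min_eq_zero_iff.1 h with h | h <;> simp [h]
  · right
    omega

theorem Real.one_div_sqrt_le_of_one_le_mul_sq {D y : ℝ} (hD : 0 < D) (hy : 0 ≤ y)
    (h : 1 ≤ D * y ^ 2) : 1 / √D ≤ y := by
  rw [div_le_iff₀ (Real.sqrt_pos.2 hD), ← Real.sqrt_sq hy, ← Real.sqrt_mul (sq_nonneg y)]
  exact Real.one_le_sqrt.2 (by linarith [mul_comm D (y ^ 2)])

namespace Matrix

theorem span_row_eq_top_of_transpose_mul_self {m n R : Type*} [Fintype m] [Fintype n]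
    [DecidableEq n] [CommRing R] (Q : Matrix m n R) (hQ : Qᵀ * Q = 1) : Submodule.span R (Set.range Q.row) = ⊤ := by
  rw [← range_vecMulLinear, LinearMap.range_eq_top]
  exact fun v => ⟨v ᵥ* Qᵀ, by rw [vecMulLinear_apply, vecMul_vecMul, hQ, vecMul_one]⟩

theorem exists_isUnit_submatrix_of_span_row_eq_top {m n K : Type*} [Fintype n] [DecidableEq n]
    [Field K] (Q : Matrix m n K) (hQ : Submodule.span K (Set.range Q.row) = ⊤) :
    ∃ e : n → m, IsUnit (Q.submatrix e id) := by
  obtain ⟨κ, a, -, hspan, hli⟩ := exists_linearIndependent' K Q.row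
  let σ := (Pi.basisFun K n).indexEquiv (Module.Basis.mk hli (by rw [hspan, hQ]))
  refine ⟨a ∘ σ, ?_⟩
  rw [← linearIndependent_rows_iff_isUnit]
  exact hli.comp σ σ.injective

theorem abs_le_one_of_abs_det_updateRow_vecMul_le {n K : Type*} [Fintype n] [DecidableEq n]
    [Field K] [LinearOrder K] [IsStrictOrderedRing K] {A : Matrix n n K} (hA : A.det ≠ 0)
    (c : n → K) (k : n) (h : |(A.updateRow k (c ᵥ* A)).det| ≤ |A.det|) : |c k| ≤ 1 := by
  rw [vecMul_eq_sum, det_updateRow_sum, smul_eq_mul, abs_mul] at h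
  exact (mul_le_iff_le_one_left (abs_pos.2 hA)).1 h

theorem updateRow_submatrix_id {m n α : Type*} [DecidableEq n] (Q : Matrix m n α) (e : n → m)
    (k : n) (i : m) :
    (Q.submatrix e id).updateRow k (Q i) = Q.submatrix (Function.update e k i) id := by
  ext a j
  by_cases h : a = k
  · subst h; simp
  · simp [updateRow_ne h, Function.update_of_ne h]

theorem sum_sq_mulVec_of_transpose_mul_self {m n R : Type*} [Fintype m] [Fintype n]
    [DecidableEq n] [CommRing R] {Q : Matrix m n R} (hQ : Qᵀ * Q = 1) (x : n → R) :
    ∑ i, (Q *ᵥ x) i ^ 2 = ∑ j, x j ^ 2 := by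
  simp only [sq]
  rw [← dotProduct, dotProduct_mulVec, ← mulVec_transpose, mulVec_mulVec, hQ, one_mulVec]
  rfl

variable {m n K : Type*} [Fintype n] [DecidableEq n] [Field K] [LinearOrder K]
  [IsStrictOrderedRing K]

theorem sq_mulVec_apply_le_of_abs_det_submatrix_le (Q : Matrix m n K) {e : n → m}
    (hdet : (Q.submatrix e id).det ≠ 0)
    (hmax : ∀ e', |(Q.submatrix e' id).det| ≤ |(Q.submatrix e id).det|) (i : m) (x : n → K) :
    (Q *ᵥ x) i ^ 2 ≤ Fintype.card n * ∑ k, (Q.submatrix e id *ᵥ x) k ^ 2 := by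
  set A := Q.submatrix e id
  set c := Q i ᵥ* A⁻¹
  have hcA : c ᵥ* A = Q i := by
    rw [vecMul_vecMul, nonsing_inv_mul _ (isUnit_iff_ne_zero.2 hdet), vecMul_one]
  have hc : ∀ k, c k ^ 2 ≤ 1 := fun k => by
    refine sq_le_one_iff_abs_le_one _ |>.2 <| abs_le_one_of_abs_det_updateRow_vecMul_le hdet c k ?_
    rw [hcA, updateRow_submatrix_id]
    exact hmax _
  calc (Q *ᵥ x) i ^ 2 = (c ⬝ᵥ (A *ᵥ x)) ^ 2 := by
        rw [dotProduct_mulVec, hcA]; rfl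
    _ ≤ (∑ k, c k ^ 2) * ∑ k, (A *ᵥ x) k ^ 2 := sum_mul_sq_le_sq_mul_sq _ _ _
    _ ≤ Fintype.card n * ∑ k, (A *ᵥ x) k ^ 2 := by
        gcongr
        simpa using sum_le_card_nsmul univ _ _ fun k _ => hc k

theorem exists_injective_sum_sq_le_mul_sum_sq_submatrix [Fintype m] (Q : Matrix m n K)
    (hQ : Qᵀ * Q = 1) :
    ∃ e : n → m, Function.Injective e ∧ ∀ x : n → K, ∑ j, x j ^ 2 ≤
      ((Fintype.card n * (Fintype.card m - Fintype.card n) + 1 : ℕ) : K) *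
        ∑ k, (Q.submatrix e id *ᵥ x) k ^ 2 := by
  classical
  obtain ⟨e₀, he₀⟩ :=
    exists_isUnit_submatrix_of_span_row_eq_top Q (span_row_eq_top_of_transpose_mul_self Q hQ)
  have : Nonempty (n → m) := ⟨e₀⟩
  -- The maximum is over all maps; a maximiser is injective as repeated rows have determinant 0.
  obtain ⟨e, hmax⟩ := Finite.exists_max fun e : n → m => |(Q.submatrix e id).det|
  have hdet : (Q.submatrix e id).det ≠ 0 :=
    abs_pos.1 <| (abs_pos.2 ((isUnit_iff_isUnit_det _).1 he₀).ne_zero).trans_le (hmax e₀)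
  have he : Function.Injective e := fun a b hab => by
    by_contra hne
    exact hdet (det_zero_of_row_eq hne (funext fun j => by simp [hab]))
  refine ⟨e, he, fun x => ?_⟩
  calc ∑ j, x j ^ 2 = ∑ i, (Q *ᵥ x) i ^ 2 := (sum_sq_mulVec_of_transpose_mul_self hQ x).symm
    _ ≤ ∑ k, (Q.submatrix e id *ᵥ x) k ^ 2 + (Fintype.card m - Fintype.card n) •
          (Fintype.card n * ∑ k, (Q.submatrix e id *ᵥ x) k ^ 2) :=
      Fintype.sum_le_sum_comp_add_of_injective he
        (sq_mulVec_apply_le_of_abs_det_submatrix_le Q hdet hmax · x)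
    _ = _ := by
      rw [nsmul_eq_mul]
      push_cast
      ring

end Matrix

theorem exists_rows_submatrix_sigma_min_ge_general
    (n p : ℕ)
    (Q : Matrix (Fin n) (Fin p) ℝ) (hQ : Qᵀ * Q = 1) :
    ∃ e : Fin p → Fin n, Function.Injective e ∧
      ∀ x : EuclideanSpace ℝ (Fin p), ‖x‖ = 1 →
        ‖Matrix.toEuclideanLin (Q.submatrix e id) x‖ ≥
          1 / Real.sqrt ((p : ℝ) * ((n : ℝ) - p) + (min p (n - p) : ℕ)) := by
  obtain ⟨e, he, hkey⟩ := Matrix.exists_injective_sum_sq_le_mul_sum_sq_submatrix Q hQ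
  have hpn : p ≤ n := by simpa using Fintype.card_le_of_injective e he
  refine ⟨e, he, fun x hx => ?_⟩
  have hT : (p : ℝ) * ((n : ℝ) - p) + (min p (n - p) : ℕ) =
      ((p * (n - p) + min p (n - p) : ℕ) : ℝ) := by
    push_cast [Nat.cast_sub hpn]
    ring
  rw [ge_iff_le, hT]
  rcases Nat.mul_sub_add_min_eq_zero_or_le p n with h0 | hle
  · -- the degenerate cases `p = 0` and `p = n`, where the bound is `1 / √0 = 0`
    simp [h0]
  · have h1 : 1 ≤ ((p * (n - p) + 1 : ℕ) : ℝ) * ‖toEuclideanLin (Q.submatrix e id) x‖ ^ 2 := by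
      have hx2 := EuclideanSpace.real_norm_sq_eq x
      rw [hx] at hx2
      rw [EuclideanSpace.real_norm_sq_eq]
      simpa [← hx2] using hkey x.ofLp
    calc 1 / √((p * (n - p) + min p (n - p) : ℕ) : ℝ) ≤ 1 / √((p * (n - p) + 1 : ℕ) : ℝ) := by
          gcongr
      _ ≤ _ := Real.one_div_sqrt_le_of_one_le_mul_sq (by positivity) (norm_nonneg _) h1

/-- Hong–Pan rank-revealing lemma.  Let `1 ≤ p ≤ n` and let
`Q ∈ ℝ^{n×p}` have orthonormal columns (`Qᵀ Q = I`).  Then there is a set of `p` rows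
(an injection `e : Fin p → Fin n`) such that the corresponding `p × p` submatrix `Q_I`
satisfies `σ_min(Q_I) ≥ 1/√(p(n−p) + min(p, n−p))`, where
`σ_min(A) = min_{‖x‖=1} ‖A x‖`. -/
theorem exists_rows_submatrix_sigma_min_ge
    (n p : ℕ) (hp : 1 ≤ p) (hpn : p ≤ n)
    (Q : Matrix (Fin n) (Fin p) ℝ) (hQ : Qᵀ * Q = 1) :
    ∃ e : Fin p → Fin n, Function.Injective e ∧
      ∀ x : EuclideanSpace ℝ (Fin p), ‖x‖ = 1 →
        ‖Matrix.toEuclideanLin (Q.submatrix e id) x‖ ≥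
          1 / Real.sqrt ((p : ℝ) * ((n : ℝ) - p) + (min p (n - p) : ℕ)) :=
  exists_rows_submatrix_sigma_min_ge_general n p Q hQ
end

section
/- Let Q ∈ ℝ^{n×n} be orthogonal and 1 ≤ p < n. Then there exists a permutation matrix P ∈ ℝ^{n×n} such that, writing PQ in block form with V₂₂ ∈ ℝ^{(n−p)×(n−p)} the bottom-right block (rows p+1, …, n and columns p+1, …, n of PQ), the block V₂₂ is invertible and its inverse satisfies ‖V₂₂^{-1}‖² ≤ (p+1)(n−p), where ‖·‖ denotes the spectral (operator) norm. -/
/-!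
Permute the rows so that the top-left `p × p` block `D` of `PQ` has maximal `|det D|` among all
choices of `p` rows (a maximal-volume block). By Cramer's rule every row of the first `p` columns
is then a combination of the rows of `D` with coefficients of modulus at most one: the bottom-left
block is `X D` with `|X i j| ≤ 1`, so `‖X‖² ≤ p (n - p)`. For an orthogonal matrix
`[[D, B], [X D, V]]` orthogonality gives `V⁻¹ = (V - X B)ᵀ = ([-X, 1] [B; V])ᵀ`, and `[B; V]` has
orthonormal columns, whence `‖V⁻¹‖² ≤ 1 + ‖X‖² ≤ 1 + p (n - p) ≤ (p + 1) (n - p)`.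
-/

open Matrix

namespace Matrix

theorem submatrix_update_eq_updateRow {R ι m : Type*} [DecidableEq ι] (A : Matrix m ι R)
    (g : ι → m) (j : ι) (r : m) :
    A.submatrix (Function.update g j r) id = (A.submatrix g id).updateRow j (A r) := by
  ext i k
  rcases eq_or_ne i j with rfl | hij <;> simp [*]

section MaximalVolume

variable {ι m : Type*} [Fintype ι] [DecidableEq ι]

theorem det_mul_eq_sum_prod_mul_det_submatrix {R : Type*} [CommRing R] [Fintype m]
    (B : Matrix ι m R) (A : Matrix m ι R) :
    (B * A).det = ∑ g : ι → m, (∏ i, B i (g i)) * (A.submatrix g id).det := by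
  have hrows : B * A = of fun i => ∑ k, B i k • A k := by
    ext i j
    simp [mul_apply, Finset.sum_apply]
  rw [hrows, det]
  exact ((detRowAlternating (n := ι) (R := R)).toMultilinearMap.map_sum _).trans
    (Finset.sum_congr rfl fun g _ => (MultilinearMap.map_smul_univ _ _ _).trans (smul_eq_mul _ _))

theorem exists_det_submatrix_ne_zero_of_det_mul_ne_zero {R : Type*} [CommRing R] [Fintype m]
    (B : Matrix ι m R) (A : Matrix m ι R) (h : (B * A).det ≠ 0) :
    ∃ g : ι → m, (A.submatrix g id).det ≠ 0 := by
  by_contra! hA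
  simp [det_mul_eq_sum_prod_mul_det_submatrix, hA] at h

theorem injective_of_det_submatrix_ne_zero {R : Type*} [CommRing R] {A : Matrix m ι R}
    {g : ι → m} (h : (A.submatrix g id).det ≠ 0) : Function.Injective g := by
  intro i j hij
  by_contra hne
  exact h (det_zero_of_row_eq hne (funext fun k => by simp [hij]))

variable {𝕜 : Type*} [Field 𝕜] [LinearOrder 𝕜] [IsStrictOrderedRing 𝕜]

theorem abs_mul_inv_submatrix_apply_le_one (A : Matrix m ι 𝕜) {g : ι → m}
    (hmax : ∀ g' : ι → m, |(A.submatrix g' id).det| ≤ |(A.submatrix g id).det|)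
    (hg : (A.submatrix g id).det ≠ 0) (r : m) (j : ι) :
    |(A * (A.submatrix g id)⁻¹) r j| ≤ 1 := by
  set D := A.submatrix g id
  set X := A * D⁻¹
  have hrow : A r = ∑ l, X r l • D l := by
    have hXD : X * D = A := nonsing_inv_mul_cancel_right _ _ (isUnit_iff_ne_zero.mpr hg)
    ext k
    simp [← hXD, mul_apply, Finset.sum_apply]
  -- Cramer's rule: replacing row `j` of `D` by row `r` of `A` scales `det D` by `X r j`.
  have hdet : (A.submatrix (Function.update g j r) id).det = X r j * D.det := by
    rw [submatrix_update_eq_updateRow, hrow, det_updateRow_sum, smul_eq_mul]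
  have h := hmax (Function.update g j r)
  rw [hdet, abs_mul] at h
  exact (mul_le_iff_le_one_left (abs_pos.mpr hg)).mp h

theorem exists_det_submatrix_ne_zero_abs_mul_inv_submatrix_apply_le_one [Fintype m]
    (B : Matrix ι m 𝕜) (A : Matrix m ι 𝕜) (h : (B * A).det ≠ 0) :
    ∃ g : ι → m, (A.submatrix g id).det ≠ 0 ∧ ∀ r j, |(A * (A.submatrix g id)⁻¹) r j| ≤ 1 := by
  obtain ⟨g₀, hg₀⟩ := exists_det_submatrix_ne_zero_of_det_mul_ne_zero B A h
  have : Nonempty (ι → m) := ⟨g₀⟩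
  obtain ⟨g, hmax⟩ := Finite.exists_max fun g : ι → m => |(A.submatrix g id).det|
  have hg : (A.submatrix g id).det ≠ 0 := abs_pos.mp ((abs_pos.mpr hg₀).trans_le (hmax g₀))
  exact ⟨g, hg, abs_mul_inv_submatrix_apply_le_one A hmax hg⟩

end MaximalVolume

theorem transpose_mul_self_submatrix {R l m n k : Type*} [CommSemiring R] [Fintype l] [Fintype m]
    (Q : Matrix m n R) {r : l → m} (hr : Function.Bijective r) (c : k → n) :
    (Q.submatrix r c)ᵀ * Q.submatrix r c = (Qᵀ * Q).submatrix c c := by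
  rw [transpose_submatrix, ← submatrix_mul _ _ _ _ _ hr]

theorem exists_perm_toBlocks₂₁_eq_mul_toBlocks₁₁ {𝕜 m m₁ m₂ : Type*} [Field 𝕜] [LinearOrder 𝕜]
    [IsStrictOrderedRing 𝕜] [Fintype m] [DecidableEq m] [Fintype m₁] [DecidableEq m₁]
    (Q : Matrix m m 𝕜) (hQ : Qᵀ * Q = 1) (e : m₁ ⊕ m₂ ≃ m) :
    ∃ σ : Equiv.Perm m, ∃ X : Matrix m₂ m₁ 𝕜, (∀ i j, |X i j| ≤ 1) ∧
      (Q.submatrix (σ ∘ e) e).toBlocks₂₁ = X * (Q.submatrix (σ ∘ e) e).toBlocks₁₁ := by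
  set A := Q.submatrix id (e ∘ Sum.inl)
  have hA : Aᵀ * A = 1 := by
    rw [transpose_mul_self_submatrix Q Function.bijective_id, hQ,
      submatrix_one _ (e.injective.comp Sum.inl_injective)]
  obtain ⟨g, hg, hX⟩ :=
    exists_det_submatrix_ne_zero_abs_mul_inv_submatrix_apply_le_one Aᵀ A (by simp [hA])
  obtain ⟨σ, hσ⟩ := Equiv.Perm.exists_extending_pair (e ∘ Sum.inl) g
    (e.injective.comp Sum.inl_injective) (injective_of_det_submatrix_ne_zero hg)
  refine ⟨σ, (A * (A.submatrix g id)⁻¹).submatrix (σ ∘ e ∘ Sum.inr) id, fun _ _ => hX _ _, ?_⟩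
  have hD : (Q.submatrix (σ ∘ e) e).toBlocks₁₁ = A.submatrix g id := by
    ext i j
    simp [A, toBlocks₁₁, ← hσ i]
  have hXD := submatrix_mul (A * (A.submatrix g id)⁻¹) (A.submatrix g id) (σ ∘ e ∘ Sum.inr) id id
    Function.bijective_id
  rw [submatrix_id_id, nonsing_inv_mul_cancel_right _ _ (isUnit_iff_ne_zero.mpr hg)] at hXD
  rw [hD, ← hXD]
  rfl

theorem conjTranspose_fromCols {R m n₁ n₂ : Type*} [Star R] (A₁ : Matrix m n₁ R)
    (A₂ : Matrix m n₂ R) : (fromCols A₁ A₂)ᴴ = fromRows A₁ᴴ A₂ᴴ := by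
  ext (i | i) j <;> rfl

theorem conjTranspose_fromRows {R m₁ m₂ n : Type*} [Star R] (A₁ : Matrix m₁ n R)
    (A₂ : Matrix m₂ n R) : (fromRows A₁ A₂)ᴴ = fromCols A₁ᴴ A₂ᴴ := by
  ext i (j | j) <;> rfl

theorem toBlocks₂₂_mul_conjTranspose_sub_eq_one {R m₁ m₂ : Type*} [Ring R] [StarRing R]
    [Fintype m₁] [Fintype m₂] [DecidableEq m₁] [DecidableEq m₂]
    {W : Matrix (m₁ ⊕ m₂) (m₁ ⊕ m₂) R} {X : Matrix m₂ m₁ R}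
    (hW : W * Wᴴ = 1) (hC : W.toBlocks₂₁ = X * W.toBlocks₁₁) :
    W.toBlocks₂₂ * (W.toBlocks₂₂ - X * W.toBlocks₁₂)ᴴ = 1 := by
  rw [← fromBlocks_toBlocks W, fromBlocks_conjTranspose, fromBlocks_multiply, ← fromBlocks_one,
    fromBlocks_inj] at hW
  obtain ⟨-, -, h₂₁, h₂₂⟩ := hW
  -- `D (D - X B)ᴴ = D Dᴴ + C Aᴴ Xᴴ = D Dᴴ + C Cᴴ`, writing `W = [[A, B], [C, D]]`.
  have hDB : W.toBlocks₂₂ * W.toBlocks₁₂ᴴ = -(W.toBlocks₂₁ * W.toBlocks₁₁ᴴ) :=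
    eq_neg_of_add_eq_zero_right h₂₁
  rw [conjTranspose_sub, conjTranspose_mul, mul_sub, ← Matrix.mul_assoc, hDB, Matrix.neg_mul,
    Matrix.mul_assoc, ← conjTranspose_mul, ← hC, sub_neg_eq_add, add_comm, h₂₂]

theorem isUnit_toBlocks₂₂ {R m₁ m₂ : Type*} [CommRing R] [StarRing R]
    [Fintype m₁] [Fintype m₂] [DecidableEq m₁] [DecidableEq m₂]
    {W : Matrix (m₁ ⊕ m₂) (m₁ ⊕ m₂) R} {X : Matrix m₂ m₁ R}
    (hW : Wᴴ * W = 1) (hC : W.toBlocks₂₁ = X * W.toBlocks₁₁) : IsUnit W.toBlocks₂₂ :=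
  (isUnit_iff_isUnit_det _).mpr <| isUnit_det_of_right_inverse <|
    toBlocks₂₂_mul_conjTranspose_sub_eq_one (mul_eq_one_comm.mp hW) hC

section L2OpNorm

open scoped Matrix.Norms.L2Operator

variable {𝕜 m n : Type*} [RCLike 𝕜] [Fintype m] [Fintype n]

theorem l2_opNorm_one_le [DecidableEq n] : ‖(1 : Matrix n n 𝕜)‖ ≤ 1 := by
  rw [← diagonal_one, l2_opNorm_diagonal]
  exact pi_norm_le_iff_of_nonneg zero_le_one |>.mpr fun _ => by simp

theorem l2_opNorm_le_one_of_conjTranspose_mul_self_eq_one [DecidableEq n] {B : Matrix m n 𝕜}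
    (h : Bᴴ * B = 1) : ‖B‖ ≤ 1 := by
  have h1 : ‖B‖ * ‖B‖ ≤ 1 := by
    rw [← l2_opNorm_conjTranspose_mul_self, h]
    exact l2_opNorm_one_le
  nlinarith [norm_nonneg B]

theorem l2_opNorm_self_mul_conjTranspose [DecidableEq m] [DecidableEq n] (A : Matrix m n 𝕜) :
    ‖A * Aᴴ‖ = ‖A‖ ^ 2 := by
  simpa [l2_opNorm_conjTranspose, sq] using l2_opNorm_conjTranspose_mul_self Aᴴ

theorem l2_opNorm_fromCols_sq_le {n₁ n₂ : Type*} [Fintype n₁] [Fintype n₂] [DecidableEq m]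
    [DecidableEq n₁] [DecidableEq n₂] (A₁ : Matrix m n₁ 𝕜) (A₂ : Matrix m n₂ 𝕜) :
    ‖fromCols A₁ A₂‖ ^ 2 ≤ ‖A₁‖ ^ 2 + ‖A₂‖ ^ 2 := by
  rw [← l2_opNorm_self_mul_conjTranspose, conjTranspose_fromCols, fromCols_mul_fromRows,
    ← l2_opNorm_self_mul_conjTranspose, ← l2_opNorm_self_mul_conjTranspose]
  exact norm_add_le _ _

theorem l2_opNorm_sq_le_sum_sq [DecidableEq n] (X : Matrix m n ℝ) :
    ‖X‖ ^ 2 ≤ ∑ i, ∑ j, X i j ^ 2 := by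
  set S := ∑ i, ∑ j, X i j ^ 2
  suffices h : ‖X‖ ≤ √S by
    simpa [Real.sq_sqrt (by positivity : 0 ≤ S)] using pow_le_pow_left₀ (norm_nonneg X) h 2
  refine ContinuousLinearMap.opNorm_le_bound _ (Real.sqrt_nonneg S) fun x => ?_
  rw [← Real.sqrt_sq (norm_nonneg _), ← Real.sqrt_sq (norm_nonneg x),
    ← Real.sqrt_mul (by positivity)]
  apply Real.sqrt_le_sqrt
  simp only [EuclideanSpace.norm_sq_eq, LinearEquiv.trans_apply,
    LinearMap.coe_toContinuousLinearMap', toLpLin_apply, mulVec, dotProduct, Real.norm_eq_abs,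
    sq_abs, S]
  rw [Finset.sum_mul]
  exact Finset.sum_le_sum fun i _ => Finset.sum_mul_sq_le_sq_mul_sq _ _ _

theorem l2_opNorm_sq_le_card_mul_card [DecidableEq n] (X : Matrix m n ℝ)
    (hX : ∀ i j, |X i j| ≤ 1) : ‖X‖ ^ 2 ≤ Fintype.card m * Fintype.card n := by
  refine (l2_opNorm_sq_le_sum_sq X).trans ?_
  calc ∑ i, ∑ j, X i j ^ 2 ≤ ∑ _i : m, ∑ _j : n, (1 : ℝ) := by
        gcongr with i _ j _
        exact (sq_le_one_iff_abs_le_one _).mpr (hX i j)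
    _ = Fintype.card m * Fintype.card n := by simp

theorem l2_opNorm_inv_toBlocks₂₂_sq_le {m₁ m₂ : Type*} [Fintype m₁] [Fintype m₂]
    [DecidableEq m₁] [DecidableEq m₂] {W : Matrix (m₁ ⊕ m₂) (m₁ ⊕ m₂) 𝕜} {X : Matrix m₂ m₁ 𝕜}
    (hW : Wᴴ * W = 1) (hC : W.toBlocks₂₁ = X * W.toBlocks₁₁) :
    ‖W.toBlocks₂₂⁻¹‖ ^ 2 ≤ 1 + ‖X‖ ^ 2 := by
  have hinv : W.toBlocks₂₂⁻¹ = (W.toBlocks₂₂ - X * W.toBlocks₁₂)ᴴ :=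
    inv_eq_right_inv (toBlocks₂₂_mul_conjTranspose_sub_eq_one (mul_eq_one_comm.mp hW) hC)
  set L : Matrix m₂ (m₁ ⊕ m₂) 𝕜 := fromCols (-X) 1
  set R : Matrix (m₁ ⊕ m₂) m₂ 𝕜 := fromRows W.toBlocks₁₂ W.toBlocks₂₂
  have hfactor : W.toBlocks₂₂ - X * W.toBlocks₁₂ = L * R := by
    rw [fromCols_mul_fromRows, Matrix.neg_mul, Matrix.one_mul, neg_add_eq_sub]
  have hR : ‖R‖ ≤ 1 := by
    refine l2_opNorm_le_one_of_conjTranspose_mul_self_eq_one ?_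
    rw [← fromBlocks_toBlocks W, fromBlocks_conjTranspose, fromBlocks_multiply, ← fromBlocks_one,
      fromBlocks_inj] at hW
    rw [conjTranspose_fromRows, fromCols_mul_fromRows, hW.2.2.2]
  calc ‖W.toBlocks₂₂⁻¹‖ ^ 2 = ‖L * R‖ ^ 2 := by rw [hinv, l2_opNorm_conjTranspose, hfactor]
    _ ≤ ‖L‖ ^ 2 := by
        gcongr
        exact (l2_opNorm_mul L R).trans (mul_le_of_le_one_right (norm_nonneg L) hR)
    _ ≤ ‖-X‖ ^ 2 + ‖(1 : Matrix m₂ m₂ 𝕜)‖ ^ 2 := l2_opNorm_fromCols_sq_le _ _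
    _ ≤ 1 + ‖X‖ ^ 2 := by
        rw [norm_neg, add_comm]
        gcongr
        exact pow_le_one₀ (norm_nonneg _) l2_opNorm_one_le

end L2OpNorm

end Matrix

/-- Let `Q ∈ ℝ^{n×n}` be orthogonal and `1 ≤ p < n`.  Then there is a
permutation of the rows (a permutation matrix `P`, encoded by `σ : Equiv.Perm (Fin n)`
with `PQ = Q.submatrix σ id`) such that the bottom-right `(n−p) × (n−p)` block `V₂₂` of
`PQ` is invertible with `‖V₂₂⁻¹‖² ≤ (p+1)(n−p)` in the spectral norm. -/
theorem exists_permutation_bottom_block_inverse_bound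
    (n p : ℕ) (hpn : p < n)
    (Q : Matrix (Fin n) (Fin n) ℝ) (hQ : Qᵀ * Q = 1) :
    ∃ σ : Equiv.Perm (Fin n),
      ∀ V₂₂ : Matrix (Fin (n - p)) (Fin (n - p)) ℝ,
        V₂₂ = (Q.submatrix σ id).submatrix
            (fun i : Fin (n - p) => (⟨p + i.1, by omega⟩ : Fin n))
            (fun j : Fin (n - p) => (⟨p + j.1, by omega⟩ : Fin n)) →
        IsUnit V₂₂ ∧
          ‖Matrix.toEuclideanCLM (𝕜 := ℝ) V₂₂⁻¹‖ ^ 2 ≤ ((p : ℝ) + 1) * ((n : ℝ) - p) := by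
  let e : Fin p ⊕ Fin (n - p) ≃ Fin n := finSumFinEquiv.trans (finCongr (by omega))
  obtain ⟨σ, X, hX, hC⟩ := exists_perm_toBlocks₂₁_eq_mul_toBlocks₁₁ Q hQ e
  set W := Q.submatrix (σ ∘ e) e
  have hW : Wᴴ * W = 1 := by
    rw [conjTranspose_eq_transpose_of_trivial,
      transpose_mul_self_submatrix Q (σ.bijective.comp e.bijective), hQ, submatrix_one_equiv]
  refine ⟨σ, fun V hV => ?_⟩
  -- `e (Sum.inr i)` unfolds to `⟨p + i, _⟩`, so `V₂₂` is the block `W.toBlocks₂₂`.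
  obtain rfl : V = W.toBlocks₂₂ := hV
  refine ⟨isUnit_toBlocks₂₂ hW hC, ?_⟩
  have hnp : (p : ℝ) + 1 ≤ n := by exact_mod_cast hpn
  open scoped Matrix.Norms.L2Operator in
  calc ‖toEuclideanCLM (𝕜 := ℝ) W.toBlocks₂₂⁻¹‖ ^ 2 = ‖W.toBlocks₂₂⁻¹‖ ^ 2 := rfl
    _ ≤ 1 + ‖X‖ ^ 2 := l2_opNorm_inv_toBlocks₂₂_sq_le hW hC
    _ ≤ 1 + ((n : ℝ) - p) * p := by
        simpa [Nat.cast_sub hpn.le] using l2_opNorm_sq_le_card_mul_card X hX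
    _ ≤ ((p : ℝ) + 1) * ((n : ℝ) - p) := by nlinarith
end

section
/- Let Ω ⊆ ℝ^d be a measurable set, ε ≥ 0, C > 0, and let f_1, …, f_n ∈ L²(Ω) have Gram matrix M with ε-rank r_ε(M) = p for some integer 1 ≤ p ≤ n. Suppose f = Σ_{j=1}^n β_j f_j with ‖β‖² ≤ C. Then there exists a subset J ⊆ {1, …, n} with |J| = p and coefficients (γ_j)_{j∈J} such that the function f̃ = Σ_{j∈J} γ_j f_j satisfies ‖f − f̃‖²_{L²(Ω)} ≤ C (p+1)(n−p)² ε. -/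
/-!
Let `V` be the matrix whose rows are the eigenvectors of `M` with eigenvalue `> ε`; it has `p`
linearly independent rows. If `x ∈ ker V` agrees with `β` outside a `p`-set `J`, then
`F - ∑_{j ∈ J} (β_j - x_j) f_j = ∑_j x_j f_j` has squared norm `xᵀ M x ≤ ε ‖x‖²`. Solving `V x = 0`
for the unknowns `x_J` is a `p × p` system whose matrix is the minor of `V` on the columns `J`.
Choosing `J` so that this minor has maximal `|det|`, Cramer's rule bounds every `|x_j|`, `j ∈ J`,
by `∑_{i ∉ J} |β_i|`, so `‖x‖² ≤ (p + 1)(n - p) C`.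
-/

open MeasureTheory Matrix Finset

theorem OrthonormalBasis.inner_map_self_le_of_orthogonal {ι E : Type*} [Fintype ι]
    [NormedAddCommGroup E] [InnerProductSpace ℝ E] (b : OrthonormalBasis ι ℝ E) {T : E →ₗ[ℝ] E}
    {μ : ι → ℝ} (hT : ∀ k, T (b k) = μ k • b k) {ε : ℝ} {x : E}
    (hx : ∀ k, ε < μ k → inner ℝ (b k) x = 0) :
    inner ℝ x (T x) ≤ ε * ‖x‖ ^ 2 := by
  have hTx : T x = ∑ k, (μ k * inner ℝ (b k) x) • b k := by
    conv_lhs => rw [← b.sum_repr' x]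
    simp only [map_sum, map_smul, hT, smul_smul, mul_comm]
  calc inner ℝ x (T x) = ∑ k, μ k * inner ℝ (b k) x ^ 2 := by
        simp only [hTx, inner_sum, inner_smul_right, real_inner_comm x]
        exact sum_congr rfl fun k _ => by ring
    _ ≤ ∑ k, ε * inner ℝ (b k) x ^ 2 := by
        refine sum_le_sum fun k _ => ?_
        rcases lt_or_ge ε (μ k) with hk | hk
        · simp [hx k hk]
        · exact mul_le_mul_of_nonneg_right hk (sq_nonneg _)
    _ = ε * ‖x‖ ^ 2 := by
        simp only [← mul_sum, ← b.sum_sq_norm_inner_right x, Real.norm_eq_abs, sq_abs]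

theorem Matrix.IsHermitian.dotProduct_mulVec_le_of_orthogonal {n : Type*} [Fintype n]
    [DecidableEq n] {A : Matrix n n ℝ} (hA : A.IsHermitian) {ε : ℝ} {x : n → ℝ}
    (hx : ∀ k, ε < hA.eigenvalues k → ⇑(hA.eigenvectorBasis k) ⬝ᵥ x = 0) :
    x ⬝ᵥ A *ᵥ x ≤ ε * (x ⬝ᵥ x) := by
  have := hA.eigenvectorBasis.inner_map_self_le_of_orthogonal (T := toEuclideanLin A)
    (μ := hA.eigenvalues) (fun k => by ext1; simp [hA.mulVec_eigenvectorBasis])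
    (x := WithLp.toLp 2 x)
    (fun k hk => by simpa [EuclideanSpace.inner_eq_star_dotProduct, dotProduct_comm] using hx k hk)
  rw [← real_inner_self_eq_norm_sq, EuclideanSpace.inner_eq_star_dotProduct,
    EuclideanSpace.inner_eq_star_dotProduct] at this
  simpa only [toLpLin_toLp, toLin'_apply, star_trivial, dotProduct_comm _ x] using this

theorem Matrix.exists_det_submatrix_ne_zero {K m n : Type*} [Field K] [Fintype m] [DecidableEq m]
    [Fintype n] (V : Matrix m n K) (hV : LinearIndependent K V.row) :
    ∃ g : m → n, (V.submatrix id g).det ≠ 0 := by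
  have hspan : Submodule.span K (Set.range V.col) = ⊤ := by
    apply Submodule.eq_top_of_finrank_eq
    rw [← rank_eq_finrank_span_cols, hV.rank_matrix, Module.finrank_fintype_fun_eq_card]
  obtain ⟨κ, a, ha, haspan, hali⟩ := exists_linearIndependent' K V.col
  have : Finite κ := Finite.of_injective a ha
  have : Fintype κ := Fintype.ofFinite κ
  have hcard : Fintype.card m = Fintype.card κ := by
    rw [← finrank_span_eq_card hali, haspan, hspan, finrank_top,
      Module.finrank_fintype_fun_eq_card]
  obtain e := Fintype.equivOfCardEq hcard
  refine ⟨a ∘ e, ?_⟩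
  rw [← isUnit_iff_ne_zero, ← isUnit_iff_isUnit_det, ← linearIndependent_cols_iff_isUnit]
  exact hali.comp e e.injective

theorem Matrix.updateCol_submatrix_id_col {α m n : Type*} [DecidableEq m] (V : Matrix m n α)
    (g : m → n) (k : m) (j : n) :
    (V.submatrix id g).updateCol k (V.col j) = V.submatrix id (Function.update g k j) := by
  ext r c
  by_cases h : c = k
  · subst h; simp [col]
  · simp [updateCol_ne h, Function.update_of_ne h]

section MaximalMinor

variable {K m n : Type*} [Field K] [LinearOrder K] [IsStrictOrderedRing K]
  [Fintype m] [DecidableEq m]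

theorem Matrix.abs_cramer_submatrix_le {V : Matrix m n K} {g : m → n}
    (hmax : ∀ g', |(V.submatrix id g').det| ≤ |(V.submatrix id g).det|)
    (s : Finset n) (c : n → K) (k : m) :
    |cramer (V.submatrix id g) (∑ j ∈ s, c j • V.col j) k|
      ≤ |(V.submatrix id g).det| * ∑ j ∈ s, |c j| := by
  rw [map_sum, Finset.sum_apply, mul_sum]
  refine (abs_sum_le_sum_abs _ _).trans (sum_le_sum fun j _ => ?_)
  rw [map_smul, Pi.smul_apply, smul_eq_mul, cramer_apply, updateCol_submatrix_id_col, abs_mul,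
    mul_comm]
  exact mul_le_mul_of_nonneg_right (hmax _) (abs_nonneg _)

theorem Matrix.exists_mulVec_eq_zero_eq_off_abs_le [Fintype n] [DecidableEq n]
    (V : Matrix m n K) (hV : LinearIndependent K V.row) (β : n → K) :
    ∃ J : Finset n, #J = Fintype.card m ∧ ∃ x : n → K, V *ᵥ x = 0 ∧ (∀ j ∉ J, x j = β j) ∧
      ∀ j ∈ J, |x j| ≤ ∑ i ∈ Jᶜ, |β i| := by
  obtain ⟨g₁, hg₁⟩ := V.exists_det_submatrix_ne_zero hV
  obtain ⟨g, -, hmax⟩ :=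
    exists_max_image univ (fun g => |(V.submatrix id g).det|) ⟨g₁, mem_univ _⟩
  set A := V.submatrix id g
  have hA : A.det ≠ 0 := abs_pos.mp ((abs_pos.mpr hg₁).trans_le (hmax g₁ (mem_univ _)))
  have hg : Function.Injective g := fun k k' h => by
    by_contra hne
    exact hA (det_zero_of_column_eq hne fun r => by simp [A, h])
  set J := univ.image g
  have hJ : ∀ j, j ∈ J ↔ ∃ k, g k = j := by simp [J]
  set w := ∑ j ∈ Jᶜ, β j • V.col j
  set y := -(A.det⁻¹ • cramer A w)
  have hAy : A *ᵥ y = -w := by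
    rw [mulVec_neg, mulVec_smul, mulVec_cramer, smul_smul, inv_mul_cancel₀ hA, one_smul]
  refine ⟨J, by rw [card_image_of_injective _ hg, card_univ], Function.extend g y β, ?_, ?_, ?_⟩
  · ext r
    rw [mulVec, dotProduct, ← sum_add_sum_compl J, sum_image fun k _ k' _ h => hg h]
    have hin : ∑ k, V r (g k) * Function.extend g y β (g k) = -w r := by
      simp only [hg.extend_apply]; exact congrFun hAy r
    have hout : ∑ j ∈ Jᶜ, V r j * Function.extend g y β j = w r := by
      simp only [w, Finset.sum_apply, Pi.smul_apply, smul_eq_mul, col_apply]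
      refine sum_congr rfl fun j hj => ?_
      rw [Function.extend_apply' _ _ _ ((hJ j).not.mp (mem_compl.mp hj)), mul_comm]
    simp [hin, hout]
  · intro j hj
    exact Function.extend_apply' _ _ _ ((hJ j).not.mp hj)
  · intro j hj
    obtain ⟨k, rfl⟩ := (hJ j).mp hj
    rw [hg.extend_apply, show y k = -(A.det⁻¹ * cramer A w k) from rfl, abs_neg, abs_mul,
      abs_inv, inv_mul_le_iff₀ (abs_pos.mpr hA)]
    exact abs_cramer_submatrix_le (fun g' => hmax g' (mem_univ _)) _ _ k

end MaximalMinor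

section Estimates

variable {ι R : Type*} [Fintype ι] [CommRing R] [LinearOrder R] [IsStrictOrderedRing R]

theorem sum_sq_le_of_abs_le_sum_compl [DecidableEq ι] {J : Finset ι} {x β : ι → R}
    (hout : ∀ j ∉ J, x j = β j) (hin : ∀ j ∈ J, |x j| ≤ ∑ i ∈ Jᶜ, |β i|) :
    ∑ j, x j ^ 2 ≤ (#J + 1) * (∑ i ∈ Jᶜ, |β i|) ^ 2 := by
  have hJ : ∑ j ∈ J, x j ^ 2 ≤ #J * (∑ i ∈ Jᶜ, |β i|) ^ 2 := by
    rw [← nsmul_eq_mul]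
    refine sum_le_card_nsmul _ _ _ fun j hj => ?_
    rw [← sq_abs]
    exact pow_le_pow_left₀ (abs_nonneg _) (hin j hj) 2
  have hJc : ∑ j ∈ Jᶜ, x j ^ 2 ≤ (∑ i ∈ Jᶜ, |β i|) ^ 2 := by
    rw [sum_congr rfl fun j hj => by rw [hout j (mem_compl.mp hj), ← sq_abs]]
    exact sum_sq_le_sq_sum_of_nonneg fun i _ => abs_nonneg _
  rw [← sum_add_sum_compl J]
  linarith

theorem sq_sum_abs_le_card_mul {β : ι → R} {C : R} (hβ : ∑ i, β i ^ 2 ≤ C) (s : Finset ι) :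
    (∑ i ∈ s, |β i|) ^ 2 ≤ #s * C := by
  calc (∑ i ∈ s, |β i|) ^ 2 ≤ #s * ∑ i ∈ s, |β i| ^ 2 := sq_sum_le_card_mul_sum_sq
    _ ≤ #s * C := by
      gcongr
      simpa only [sq_abs] using (sum_le_univ_sum_of_nonneg fun i => sq_nonneg (β i)).trans hβ

end Estimates

theorem sum_smul_sub_sum_sub_smul {ι R M : Type*} [Fintype ι] [DecidableEq ι] [Ring R]
    [AddCommGroup M] [Module R M] (f : ι → M) {J : Finset ι} {x β : ι → R}
    (hout : ∀ j ∉ J, x j = β j) :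
    ∑ j, β j • f j - ∑ j ∈ J, (β j - x j) • f j = ∑ j, x j • f j := by
  have hcompl : ∑ j ∈ Jᶜ, x j • f j = ∑ j ∈ Jᶜ, β j • f j :=
    sum_congr rfl fun j hj => by rw [hout j (mem_compl.mp hj)]
  rw [← sum_add_sum_compl J (fun j => β j • f j), ← sum_add_sum_compl J (fun j => x j • f j),
    hcompl]
  simp only [sub_smul, sum_sub_distrib]
  abel

theorem exists_subset_approximation_of_eps_rank_general
    (d n p : ℕ)
    (Ω : Set (EuclideanSpace ℝ (Fin d)))
    (ε C : ℝ) (hε : 0 ≤ ε)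
    (f : Fin n → Lp ℝ 2 (volume.restrict Ω))
    (M : Matrix (Fin n) (Fin n) ℝ)
    (hM : ∀ i j, M i j = ∫ x, (f i : EuclideanSpace ℝ (Fin d) → ℝ) x *
      (f j : EuclideanSpace ℝ (Fin d) → ℝ) x ∂(volume.restrict Ω))
    (hHerm : M.IsHermitian)
    (hrank : (Finset.univ.filter (fun i => ε < hHerm.eigenvalues i)).card = p)
    (β : Fin n → ℝ) (hβ : ∑ j, (β j) ^ 2 ≤ C)
    (F : Lp ℝ 2 (volume.restrict Ω)) (hF : F = ∑ j, β j • f j) :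
    ∃ J : Finset (Fin n), J.card = p ∧
      ∃ γ : Fin n → ℝ,
        ‖F - ∑ j ∈ J, γ j • f j‖ ^ 2 ≤ C * ((p : ℝ) + 1) * ((n : ℝ) - p) ^ 2 * ε := by
  have hgram : M = gram ℝ f := by
    ext i j
    rw [hM, gram_apply, L2.inner_def]
    simp [mul_comm]
  set S := univ.filter fun k => ε < hHerm.eigenvalues k
  have hV : LinearIndependent ℝ (Matrix.row fun s : S => ⇑(hHerm.eigenvectorBasis s)) :=
    (hHerm.eigenvectorBasis.orthonormal.linearIndependent.comp _ Subtype.val_injective).map'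
      (WithLp.linearEquiv 2 ℝ (Fin n → ℝ)).toLinearMap (LinearEquiv.ker _)
  obtain ⟨J, hJ, x, hVx, hout, hin⟩ := exists_mulVec_eq_zero_eq_off_abs_le _ hV β
  rw [Fintype.card_coe, hrank] at hJ
  refine ⟨J, hJ, fun j => β j - x j, ?_⟩
  have hquad : ‖∑ j, x j • f j‖ ^ 2 ≤ ε * ∑ j, x j ^ 2 := by
    rw [← real_inner_self_eq_norm_sq, ← star_dotProduct_gram_mulVec, ← hgram, star_trivial]
    simpa only [dotProduct, ← sq] using hHerm.dotProduct_mulVec_le_of_orthogonal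
      fun k hk => congrFun hVx ⟨k, mem_filter.mpr ⟨mem_univ k, hk⟩⟩
  have hJc : (#Jᶜ : ℝ) = n - p := by
    rw [card_compl, Nat.cast_sub (hJ ▸ card_le_univ J), hJ, Fintype.card_fin]
  have hnp : (#Jᶜ : ℝ) ≤ (#Jᶜ : ℝ) ^ 2 := by exact_mod_cast Nat.le_self_pow two_ne_zero _
  have hC : 0 ≤ C := (sum_nonneg fun j _ => sq_nonneg (β j)).trans hβ
  rw [hF, sum_smul_sub_sum_sub_smul f hout, ← hJc, ← hJ]
  calc ‖∑ j, x j • f j‖ ^ 2 ≤ ε * ∑ j, x j ^ 2 := hquad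
    _ ≤ ε * ((#J + 1) * (#Jᶜ * C)) := by
        grw [sum_sq_le_of_abs_le_sum_compl hout hin, sq_sum_abs_le_card_mul hβ]
    _ = C * ((#J : ℝ) + 1) * #Jᶜ * ε := by ring
    _ ≤ C * ((#J : ℝ) + 1) * (#Jᶜ : ℝ) ^ 2 * ε := by grw [hnp]

/-- Theorem 3.1 of the paper.  Let `Ω ⊆ ℝ^d` be measurable, `ε ≥ 0`,
`C > 0`, and `f_1, …, f_n ∈ L²(Ω)` with Gram matrix `M` of `ε`-rank `p` (`1 ≤ p ≤ n`).
If `f = ∑_j β_j f_j` with `‖β‖² ≤ C`, then there are a subset `J` with `|J| = p` and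
coefficients `γ` such that `f̃ = ∑_{j∈J} γ_j f_j` satisfies
`‖f − f̃‖² ≤ C (p+1)(n−p)² ε`. -/
theorem exists_subset_approximation_of_eps_rank
    (d n p : ℕ) (hp1 : 1 ≤ p) (hpn : p ≤ n)
    (Ω : Set (EuclideanSpace ℝ (Fin d))) (hΩ : MeasurableSet Ω)
    (ε C : ℝ) (hε : 0 ≤ ε) (hC : 0 < C)
    (f : Fin n → Lp ℝ 2 (volume.restrict Ω))
    (M : Matrix (Fin n) (Fin n) ℝ)
    (hM : ∀ i j, M i j = ∫ x, (f i : EuclideanSpace ℝ (Fin d) → ℝ) x *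
      (f j : EuclideanSpace ℝ (Fin d) → ℝ) x ∂(volume.restrict Ω))
    (hHerm : M.IsHermitian)
    (hrank : (Finset.univ.filter (fun i => ε < hHerm.eigenvalues i)).card = p)
    (β : Fin n → ℝ) (hβ : ∑ j, (β j) ^ 2 ≤ C)
    (F : Lp ℝ 2 (volume.restrict Ω)) (hF : F = ∑ j, β j • f j) :
    ∃ J : Finset (Fin n), J.card = p ∧
      ∃ γ : Fin n → ℝ,
        ‖F - ∑ j ∈ J, γ j • f j‖ ^ 2 ≤ C * ((p : ℝ) + 1) * ((n : ℝ) - p) ^ 2 * ε :=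
  exists_subset_approximation_of_eps_rank_general d n p Ω ε C hε f M hM hHerm hrank β hβ F hF
end

section
/- Let Ω ⊆ ℝ^d be a measurable set, ε ≥ 0, C > 0, C_S > 0. Let φ_1, …, φ_n ∈ L²(Ω) have Gram matrix M with ε-rank r_ε(M) = p for some 1 ≤ p ≤ n, and let u_n = Σ_{j=1}^n β_j φ_j with ‖β‖² ≤ C. Let G : L²(Ω) → L²(Ω) be a map satisfying the stability condition ‖u − v‖ ≤ C_S ‖G(u) − G(v)‖ for all u, v ∈ L²(Ω), let f ∈ L²(Ω), and let u* ∈ L²(Ω) satisfy G(u*) = f. Let F_p ⊆ L²(Ω) be any set that contains Σ_{j∈J} γ_j φ_j for every subset J ⊆ {1,…,n} with |J| = p and every choice of coefficients γ. Then √(L(u_n)) ≥ (1/C_S) ( dist(u*, F_p) − √(C (p+1)(n−p)² ε) ), where L(u) = ‖G(u) − f‖²_{L²(Ω)} and dist(u, A) = inf_{v ∈ A} ‖u − v‖_{L²(Ω)}. -/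
/-!
Let `m = n - p` be the number of eigenvalues of the Gram matrix `M` that are at most `ε`, and `V`
the span of their eigenvectors, so that `‖∑ j, w j • φ j‖² = wᵀ M w ≤ ε ‖w‖²` for `w ∈ V`.
Selecting the `m × m` minor of maximal volume of a basis matrix of `V` (rows `T`), Cramer's rule
gives `w ∈ V` that agrees with `β` on `T` and satisfies `|w j| ≤ ∑ k ∈ T, |β k|`. Then
`v = ∑ j ∉ T, (β j - w j) • φ j` lies in `F_p` and `‖uₙ - v‖² = ‖∑ j, w j • φ j‖² ≤ ε n m ‖β‖²
≤ C (p + 1) m² ε`, and stability turns `dist(u*, F_p) ≤ ‖u* - uₙ‖ + ‖uₙ - v‖` into the bound.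
-/

open MeasureTheory Matrix Finset
open scoped InnerProductSpace

namespace Matrix

theorem updateRow_submatrix_id_s9 {α κ ι : Type*} [DecidableEq ι] (U : Matrix κ ι α) (f : ι → κ)
    (s : ι) (j : κ) :
    (U.submatrix f id).updateRow s (U j) = U.submatrix (Function.update f s j) id := by
  ext i t
  by_cases h : i = s
  · subst h; simp
  · simp [h]

theorem vecMul_inv_apply {K ι : Type*} [Field K] [Fintype ι] [DecidableEq ι] (A : Matrix ι ι K)
    (r : ι → K) (s : ι) :
    (r ᵥ* A⁻¹) s = (A.updateRow s r).det / A.det := by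
  rw [inv_def, Ring.inverse_eq_inv', vecMul_smul, ← mulVec_transpose, adjugate_transpose,
    ← cramer_eq_adjugate_mulVec, Pi.smul_apply, cramer_transpose_apply, smul_eq_mul,
    inv_mul_eq_div]

theorem exists_det_submatrix_ne_zero_s9 {K κ ι : Type*} [Field K] [Fintype κ] [Fintype ι]
    [DecidableEq ι] (U : Matrix κ ι K) (hU : LinearIndependent K Uᵀ) :
    ∃ f : ι → κ, (U.submatrix f id).det ≠ 0 := by
  classical
  obtain ⟨b, -, -, hspan, hb⟩ :=
    exists_linearIndepOn_extension (linearIndepOn_empty K U.row) (Set.empty_subset Set.univ)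
  have hcard : Fintype.card b = Fintype.card ι := by
    refine le_antisymm (by simpa using hb.linearIndependent.fintype_card_le_finrank) ?_
    calc Fintype.card ι = U.rank := by
          rw [← rank_transpose, LinearIndependent.rank_matrix (M := Uᵀ) hU]
      _ = Module.finrank K (Submodule.span K (Set.range U.row)) := U.rank_eq_finrank_span_row
      _ ≤ Module.finrank K (Submodule.span K (U.row '' b)) :=
          Submodule.finrank_mono (Submodule.span_le.2 (by simpa using hspan))
      _ = Fintype.card b := by
          rw [Set.image_eq_range, finrank_span_eq_card hb.linearIndependent]
  obtain e := Fintype.equivOfCardEq hcard.symm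
  refine ⟨Subtype.val ∘ e, ?_⟩
  rw [← isUnit_iff_ne_zero, ← isUnit_iff_isUnit_det, ← linearIndependent_rows_iff_isUnit]
  exact hb.linearIndependent.comp e e.injective

variable {K : Type*} [Field K] [LinearOrder K] [IsStrictOrderedRing K]
  {κ ι : Type*} [Fintype ι] [DecidableEq ι]

theorem abs_vecMul_inv_submatrix_le_one (U : Matrix κ ι K) {f : ι → κ}
    (hf : ∀ g, |(U.submatrix g id).det| ≤ |(U.submatrix f id).det|) (j : κ) (s : ι) :
    |(U j ᵥ* (U.submatrix f id)⁻¹) s| ≤ 1 := by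
  rw [vecMul_inv_apply, updateRow_submatrix_id_s9, abs_div]
  exact div_le_one_of_le₀ (hf _) (abs_nonneg _)

theorem exists_mulVec_eqOn_abs_le_sum [Fintype κ] (U : Matrix κ ι K) (hU : LinearIndependent K Uᵀ)
    (β : κ → K) :
    ∃ T : Finset κ, #T = Fintype.card ι ∧ ∃ a : ι → K,
      (∀ j ∈ T, (U *ᵥ a) j = β j) ∧ ∀ j, |(U *ᵥ a) j| ≤ ∑ k ∈ T, |β k| := by
  obtain ⟨f₀, hf₀⟩ := exists_det_submatrix_ne_zero_s9 U hU
  have : Nonempty (ι → κ) := ⟨f₀⟩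
  obtain ⟨f, hf⟩ := Finite.exists_max fun g ↦ |(U.submatrix g id).det|
  set A := U.submatrix f id
  have hA : A.det ≠ 0 := abs_pos.1 ((abs_pos.2 hf₀).trans_le (hf f₀))
  have hf_inj : f.Injective := fun s t hst ↦ by
    by_contra hne
    exact hA (det_zero_of_row_eq hne (by ext; simp [A, hst]))
  refine ⟨univ.map ⟨f, hf_inj⟩, by simp, A⁻¹ *ᵥ (β ∘ f), ?_, fun j ↦ ?_⟩
  · simp only [mem_map, mem_univ, true_and, Function.Embedding.coeFn_mk]
    rintro _ ⟨s, rfl⟩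
    change (A *ᵥ (A⁻¹ *ᵥ (β ∘ f))) s = β (f s)
    rw [mulVec_mulVec, mul_nonsing_inv _ hA.isUnit, one_mulVec, Function.comp_apply]
  · rw [mulVec, dotProduct_mulVec, sum_map]
    calc |∑ s, (U j ᵥ* A⁻¹) s * β (f s)| ≤ ∑ s, |(U j ᵥ* A⁻¹) s| * |β (f s)| := by
          simpa only [abs_mul] using abs_sum_le_sum_abs (fun s ↦ (U j ᵥ* A⁻¹) s * β (f s)) univ
      _ ≤ ∑ s, |β (f s)| := sum_le_sum fun s _ ↦
          mul_le_of_le_one_left (abs_nonneg _) (abs_vecMul_inv_submatrix_le_one U hf j s)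

end Matrix

theorem Orthonormal.inner_sum_smul_apply_le {E ι : Type*} [NormedAddCommGroup E]
    [InnerProductSpace ℝ E] [Fintype ι] {v : ι → E} (hv : Orthonormal ℝ v) (T : E →ₗ[ℝ] E)
    {μ : ι → ℝ} (hTv : ∀ t, T (v t) = μ t • v t) {ε : ℝ} (hμ : ∀ t, μ t ≤ ε) (a : ι → ℝ) :
    ⟪∑ t, a t • v t, T (∑ t, a t • v t)⟫_ℝ ≤ ε * ‖∑ t, a t • v t‖ ^ 2 := by
  have hT : T (∑ t, a t • v t) = ∑ t, (μ t * a t) • v t := by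
    simp only [map_sum, map_smul, hTv, smul_smul, mul_comm]
  rw [hT, ← real_inner_self_eq_norm_sq, hv.inner_sum, hv.inner_sum, mul_sum]
  refine sum_le_sum fun t _ ↦ ?_
  simp only [conj_trivial]
  nlinarith [hμ t, mul_self_nonneg (a t)]

theorem Matrix.norm_sum_smul_sq_eq_inner_gram {E κ : Type*} [NormedAddCommGroup E]
    [InnerProductSpace ℝ E] [Fintype κ] [DecidableEq κ] (φ : κ → E) (x : EuclideanSpace ℝ κ) :
    ‖∑ j, x j • φ j‖ ^ 2 = ⟪x, toLpLin 2 2 (gram ℝ φ) x⟫_ℝ := by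
  rw [← real_inner_self_eq_norm_sq, ← star_dotProduct_gram_mulVec, dotProduct_comm]
  rfl

theorem EuclideanSpace.norm_sq_le_of_abs_le {κ : Type*} [Fintype κ] {x : EuclideanSpace ℝ κ}
    {s : ℝ} (hx : ∀ j, |x j| ≤ s) : ‖x‖ ^ 2 ≤ Fintype.card κ * s ^ 2 := by
  rw [EuclideanSpace.norm_sq_eq, ← nsmul_eq_mul, ← card_univ]
  exact sum_le_card_nsmul _ _ _ fun j _ ↦ by
    simpa only [Real.norm_eq_abs] using pow_le_pow_left₀ (abs_nonneg _) (hx j) 2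

theorem card_filter_lt_add_card_filter_le {κ : Type*} [Fintype κ] (f : κ → ℝ) (ε : ℝ) :
    #{i | ε < f i} + #{i | f i ≤ ε} = Fintype.card κ := by
  simpa only [not_lt, card_univ] using card_filter_add_card_filter_not (s := univ) (ε < f ·)

theorem Matrix.exists_norm_sum_smul_sub_sum_smul_sq_le {E κ : Type*} [NormedAddCommGroup E]
    [InnerProductSpace ℝ E] [Fintype κ] [DecidableEq κ] (φ : κ → E)
    (hG : (gram ℝ φ).IsHermitian) {ε : ℝ} (hε : 0 ≤ ε) (β : κ → ℝ) :
    ∃ J : Finset κ, #J = #{i | ε < hG.eigenvalues i} ∧ ∃ γ : κ → ℝ,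
      ‖∑ j, β j • φ j - ∑ j ∈ J, γ j • φ j‖ ^ 2 ≤
        ε * Fintype.card κ * #{i | hG.eigenvalues i ≤ ε} * ∑ j, β j ^ 2 := by
  set e := hG.eigenvectorBasis
  let ι := {i // hG.eigenvalues i ≤ ε}
  set U : Matrix κ ι ℝ := of fun j t ↦ e t j
  have hU : LinearIndependent ℝ Uᵀ :=
    (e.orthonormal.linearIndependent.comp _ Subtype.val_injective).map'
      (WithLp.linearEquiv 2 ℝ (κ → ℝ)).toLinearMap (LinearEquiv.ker _)
  obtain ⟨T, hT, a, hUa, hUa_le⟩ := exists_mulVec_eqOn_abs_le_sum U hU β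
  set w : EuclideanSpace ℝ κ := ∑ t, a t • e t
  have hw : ∀ j, w j = (U *ᵥ a) j := fun j ↦ by
    simp [w, U, mulVec, dotProduct, mul_comm]
  have hTv : ∀ t : ι, toLpLin 2 2 (gram ℝ φ) (e t) = hG.eigenvalues t • e t := fun t ↦ by
    ext j
    simp [e, hG.mulVec_eigenvectorBasis]
  have hcard : #{i | hG.eigenvalues i ≤ ε} = Fintype.card ι := (Fintype.card_subtype _).symm
  refine ⟨Tᶜ, ?_, β - U *ᵥ a, ?_⟩
  · have := card_filter_lt_add_card_filter_le hG.eigenvalues ε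
    rw [card_compl, hT]
    omega
  have hdiff : ∑ j, β j • φ j - ∑ j ∈ Tᶜ, (β - U *ᵥ a) j • φ j = ∑ j, w j • φ j := by
    rw [sum_subset (subset_univ Tᶜ) fun j _ hj ↦ by
      rw [Pi.sub_apply, hUa j (by simpa using hj), sub_self, zero_smul], ← sum_sub_distrib]
    simp only [hw, Pi.sub_apply, ← sub_smul, sub_sub_cancel]
  rw [hdiff, norm_sum_smul_sq_eq_inner_gram]
  calc ⟪w, toLpLin 2 2 (gram ℝ φ) w⟫_ℝ ≤ ε * ‖w‖ ^ 2 :=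
        (e.orthonormal.comp _ Subtype.val_injective).inner_sum_smul_apply_le _ hTv
          (fun t ↦ t.2) a
    _ ≤ ε * (Fintype.card κ * (∑ k ∈ T, |β k|) ^ 2) :=
        mul_le_mul_of_nonneg_left
          (EuclideanSpace.norm_sq_le_of_abs_le fun j ↦ (hw j).symm ▸ hUa_le j) hε
    _ ≤ ε * (Fintype.card κ * (#T * ∑ k ∈ T, β k ^ 2)) := by
        gcongr
        simpa only [sq_abs] using sq_sum_le_card_mul_sum_sq (s := T) (f := fun k ↦ |β k|)
    _ ≤ ε * Fintype.card κ * #{i | hG.eigenvalues i ≤ ε} * ∑ j, β j ^ 2 := by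
        rw [hcard, ← hT, mul_assoc, mul_assoc]
        gcongr
        exact subset_univ T

theorem Metric.infDist_le_mul_norm_add_norm_of_stable {X : Type*} [SeminormedAddCommGroup X]
    {G : X → X} {c : ℝ} (hG : ∀ u v, ‖u - v‖ ≤ c * ‖G u - G v‖) {F : Set X} {v : X} (u x : X)
    (hv : v ∈ F) : infDist x F ≤ c * ‖G u - G x‖ + ‖u - v‖ :=
  calc infDist x F ≤ dist x v := infDist_le_dist_of_mem hv
    _ ≤ dist x u + dist u v := dist_triangle _ _ _
    _ ≤ c * ‖G u - G x‖ + ‖u - v‖ := by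
        rw [dist_comm, dist_eq_norm, dist_eq_norm]
        exact add_le_add (hG u x) le_rfl

theorem Nat.add_mul_le_add_one_mul_sq (p m : ℕ) : (p + m) * m ≤ (p + 1) * m ^ 2 := by
  rw [sq, ← mul_assoc]
  rcases m with _ | m
  · simp
  · exact Nat.mul_le_mul_right _ (by nlinarith [Nat.zero_le (p * m)])

theorem loss_lower_bound_of_eps_rank_general
    (d n p : ℕ)
    (Ω : Set (EuclideanSpace ℝ (Fin d)))
    (ε C CS : ℝ) (hε : 0 ≤ ε) (hCS : 0 < CS)
    (φ : Fin n → Lp ℝ 2 (volume.restrict Ω))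
    (M : Matrix (Fin n) (Fin n) ℝ)
    (hM : ∀ i j, M i j = ∫ x, (φ i : EuclideanSpace ℝ (Fin d) → ℝ) x *
      (φ j : EuclideanSpace ℝ (Fin d) → ℝ) x ∂(volume.restrict Ω))
    (hHerm : M.IsHermitian)
    (hrank : (Finset.univ.filter (fun i => ε < hHerm.eigenvalues i)).card = p)
    (β : Fin n → ℝ) (hβ : ∑ j, (β j) ^ 2 ≤ C)
    (un : Lp ℝ 2 (volume.restrict Ω)) (hun : un = ∑ j, β j • φ j)
    (G : Lp ℝ 2 (volume.restrict Ω) → Lp ℝ 2 (volume.restrict Ω))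
    (hstab : ∀ u v : Lp ℝ 2 (volume.restrict Ω), ‖u - v‖ ≤ CS * ‖G u - G v‖)
    (f uStar : Lp ℝ 2 (volume.restrict Ω)) (huStar : G uStar = f)
    (Fp : Set (Lp ℝ 2 (volume.restrict Ω)))
    (hFp : ∀ (J : Finset (Fin n)) (γ : Fin n → ℝ), J.card = p →
      (∑ j ∈ J, γ j • φ j) ∈ Fp) :
    Real.sqrt (‖G un - f‖ ^ 2) ≥
      (1 / CS) * (Metric.infDist uStar Fp -
        Real.sqrt (C * ((p : ℝ) + 1) * ((n : ℝ) - p) ^ 2 * ε)) := by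
  obtain rfl : M = gram ℝ φ := by
    ext i j
    rw [hM, gram_apply, L2.inner_def]
    exact integral_congr_ae (.of_forall fun x ↦ mul_comm _ _)
  obtain ⟨J, hJ, γ, hγ⟩ := exists_norm_sum_smul_sub_sum_smul_sq_le φ hHerm hε β
  set m := #{i | hHerm.eigenvalues i ≤ ε}
  have hpm : (n : ℝ) = p + m := by
    have := card_filter_lt_add_card_filter_le hHerm.eigenvalues ε
    rw [hrank, Fintype.card_fin] at this
    exact_mod_cast this.symm
  have happrox : ‖un - ∑ j ∈ J, γ j • φ j‖ ≤ √(C * ((p : ℝ) + 1) * ((n : ℝ) - p) ^ 2 * ε) := by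
    refine Real.le_sqrt_of_sq_le (hun ▸ hγ.trans ?_)
    rw [Fintype.card_fin, hpm, add_sub_cancel_left]
    calc ε * (p + m) * m * ∑ j, β j ^ 2 ≤ ε * ((p + 1) * m ^ 2) * C := by
          rw [mul_assoc ε]
          gcongr ε * ?_ * ?_
          exact_mod_cast Nat.add_mul_le_add_one_mul_sq p m
      _ = C * (p + 1) * m ^ 2 * ε := by ring
  have hdist := Metric.infDist_le_mul_norm_add_norm_of_stable hstab un uStar
    (hFp J γ (hJ.trans hrank))
  rw [huStar] at hdist
  rw [Real.sqrt_sq (norm_nonneg _), ge_iff_le, one_div, inv_mul_le_iff₀ hCS]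
  linarith

/-- Theorem 3.2 of the paper.  Under the stability condition
`‖u − v‖ ≤ C_S ‖G(u) − G(v)‖`, if `u_n = ∑_j β_j φ_j` with `‖β‖² ≤ C` and the Gram matrix
of the `φ_j` has `ε`-rank `p`, and `F_p` contains all `p`-term sub-combinations of the
`φ_j`, then `√(L(u_n)) ≥ (1/C_S)(dist(u*, F_p) − √(C (p+1)(n−p)² ε))`, where
`L(u) = ‖G(u) − f‖²` and `G(u*) = f`. -/
theorem loss_lower_bound_of_eps_rank
    (d n p : ℕ) (hp1 : 1 ≤ p) (hpn : p ≤ n)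
    (Ω : Set (EuclideanSpace ℝ (Fin d))) (hΩ : MeasurableSet Ω)
    (ε C CS : ℝ) (hε : 0 ≤ ε) (hC : 0 < C) (hCS : 0 < CS)
    (φ : Fin n → Lp ℝ 2 (volume.restrict Ω))
    (M : Matrix (Fin n) (Fin n) ℝ)
    (hM : ∀ i j, M i j = ∫ x, (φ i : EuclideanSpace ℝ (Fin d) → ℝ) x *
      (φ j : EuclideanSpace ℝ (Fin d) → ℝ) x ∂(volume.restrict Ω))
    (hHerm : M.IsHermitian)
    (hrank : (Finset.univ.filter (fun i => ε < hHerm.eigenvalues i)).card = p)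
    (β : Fin n → ℝ) (hβ : ∑ j, (β j) ^ 2 ≤ C)
    (un : Lp ℝ 2 (volume.restrict Ω)) (hun : un = ∑ j, β j • φ j)
    (G : Lp ℝ 2 (volume.restrict Ω) → Lp ℝ 2 (volume.restrict Ω))
    (hstab : ∀ u v : Lp ℝ 2 (volume.restrict Ω), ‖u - v‖ ≤ CS * ‖G u - G v‖)
    (f uStar : Lp ℝ 2 (volume.restrict Ω)) (huStar : G uStar = f)
    (Fp : Set (Lp ℝ 2 (volume.restrict Ω)))
    (hFp : ∀ (J : Finset (Fin n)) (γ : Fin n → ℝ), J.card = p →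
      (∑ j ∈ J, γ j • φ j) ∈ Fp) :
    Real.sqrt (‖G un - f‖ ^ 2) ≥
      (1 / CS) * (Metric.infDist uStar Fp -
        Real.sqrt (C * ((p : ℝ) + 1) * ((n : ℝ) - p) ^ 2 * ε)) :=
  loss_lower_bound_of_eps_rank_general d n p Ω ε C CS hε hCS φ M hM hHerm hrank β hβ un hun G hstab
    f uStar huStar Fp hFp
end

section
/- Let Ω ⊆ ℝ^d be a measurable set, ε ≥ 0, C > 0. Let φ_1, …, φ_n ∈ L²(Ω) have Gram matrix M with ε-rank r_ε(M) = p for some 1 ≤ p ≤ n, and let u_n = Σ_{j=1}^n β_j φ_j with ‖β‖² ≤ C. Let f ∈ L²(Ω) and let F_p denote the set of all functions of the form Σ_{j∈J} γ_j φ_j with J ⊆ {1,…,n}, |J| = p, and γ_j ∈ ℝ. Then ‖u_n − f‖_{L²(Ω)} ≥ dist(f, F_p) − √(C (p+1)(n−p)² ε), where dist(u, A) = inf_{v ∈ A} ‖u − v‖_{L²(Ω)}. -/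
/-!
Diagonalise the Gram matrix, `M = ∑ᵢ λᵢ vᵢ vᵢᵀ`, so that exactly `p` of the orthonormal
eigenvectors `vᵢ` have `λᵢ > ε`, and let `V` be the `p × n` matrix with these rows. Choose the
`p` columns `J` of `V` whose minor has maximal absolute value, and correct `β` on `J` only, by
Cramer's rule, to a vector `δ` with `V δ = 0`. Every Cramer quotient is a ratio of two minors, so
the correction is bounded coordinatewise by `∑_{k ∉ J} |βₖ|`, which gives
`‖δ‖² ≤ (p + 1)(n − p)‖β‖²`. As `δ` is orthogonal to the eigenvectors with `λᵢ > ε`,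
`‖∑ⱼ δⱼ φⱼ‖² = δᵀ M δ ≤ ε ‖δ‖²`, while `uₙ − ∑ⱼ δⱼ φⱼ = ∑_{j ∈ J} (βⱼ − δⱼ) φⱼ` lies in `F_p`.
-/

open MeasureTheory Matrix Finset

theorem Fintype.sum_extend {m n α M : Type*} [Fintype m] [Fintype n] [DecidableEq n]
    [AddCommMonoid M] {σ : m → n} (hσ : σ.Injective) (x : m → α) (β : n → α) (g : n → α → M) :
    ∑ k, g k (Function.extend σ x β k) =
      ∑ j, g (σ j) (x j) + ∑ k ∈ (univ.map ⟨σ, hσ⟩)ᶜ, g k (β k) := by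
  rw [← sum_add_sum_compl (univ.map ⟨σ, hσ⟩), sum_map]
  congr 1
  · exact Finset.sum_congr rfl fun j _ ↦ by simp [hσ.extend_apply]
  · refine Finset.sum_congr rfl fun k hk ↦ ?_
    rw [Function.extend_apply']
    simpa using hk

namespace Matrix

variable {m n : Type*} [Fintype m] [DecidableEq m]

theorem exists_det_submatrix_ne_zero_of_rank_eq [Fintype n] {K : Type*} [Field K]
    (V : Matrix m n K) (hV : V.rank = Fintype.card m) :
    ∃ σ : m → n, (V.submatrix id σ).det ≠ 0 := by
  obtain ⟨κ, a, ha, hspan, hli⟩ := exists_linearIndependent' K V.col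
  have : Fintype κ := Fintype.ofInjective a ha
  have hcard : Fintype.card m = Fintype.card κ := by
    rw [linearIndependent_iff_card_eq_finrank_span.1 hli, Set.finrank, hspan,
      ← rank_eq_finrank_span_cols, hV]
  let e := Fintype.equivOfCardEq hcard
  refine ⟨a ∘ e, ?_⟩
  rw [← isUnit_iff_ne_zero, ← isUnit_iff_isUnit_det, ← linearIndependent_cols_iff_isUnit]
  exact hli.comp e e.injective

theorem exists_det_submatrix_ne_zero_and_forall_abs_det_submatrix_le [Fintype n]
    (V : Matrix m n ℝ) (hV : V.rank = Fintype.card m) :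
    ∃ σ : m → n, (V.submatrix id σ).det ≠ 0 ∧
      ∀ τ : m → n, |(V.submatrix id τ).det| ≤ |(V.submatrix id σ).det| := by
  obtain ⟨σ₀, hσ₀⟩ := exists_det_submatrix_ne_zero_of_rank_eq V hV
  have : Nonempty (m → n) := ⟨σ₀⟩
  obtain ⟨σ, hσ⟩ := Finite.exists_max fun τ : m → n ↦ |(V.submatrix id τ).det|
  exact ⟨σ, abs_pos.1 ((abs_pos.2 hσ₀).trans_le (hσ σ₀)), hσ⟩

section MaximalMinor

variable {V : Matrix m n ℝ} {σ : m → n}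

theorem abs_cramer_submatrix_col_le
    (hσ : ∀ τ : m → n, |(V.submatrix id τ).det| ≤ |(V.submatrix id σ).det|) (k : n) (j : m) :
    |cramer (V.submatrix id σ) (V.col k) j| ≤ |(V.submatrix id σ).det| := by
  classical
  have : (V.submatrix id σ).updateCol j (V.col k) = V.submatrix id (Function.update σ j k) := by
    ext i j'
    by_cases h : j' = j
    · subst h; simp
    · simp [h]
  rw [cramer_apply, this]
  exact hσ _

theorem abs_cramer_submatrix_sum_le
    (hσ : ∀ τ : m → n, |(V.submatrix id τ).det| ≤ |(V.submatrix id σ).det|)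
    (s : Finset n) (c : n → ℝ) (j : m) :
    |cramer (V.submatrix id σ) (∑ k ∈ s, c k • V.col k) j| ≤
      (∑ k ∈ s, |c k|) * |(V.submatrix id σ).det| := by
  simp only [map_sum, map_smul, Finset.sum_apply, Pi.smul_apply, smul_eq_mul, Finset.sum_mul]
  refine (abs_sum_le_sum_abs _ _).trans (sum_le_sum fun k _ ↦ ?_)
  rw [abs_mul]
  exact mul_le_mul_of_nonneg_left (abs_cramer_submatrix_col_le hσ k j) (abs_nonneg _)

end MaximalMinor

theorem exists_finset_card_eq_forall_notMem_eq_mulVec_eq_zero [Fintype n] [DecidableEq n]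
    (V : Matrix m n ℝ) (hV : V.rank = Fintype.card m) (β : n → ℝ) :
    ∃ J : Finset n, #J = Fintype.card m ∧ ∃ δ : n → ℝ, (∀ k ∉ J, δ k = β k) ∧ V *ᵥ δ = 0 ∧
      δ ⬝ᵥ δ ≤ (Fintype.card m + 1) * (∑ k ∈ Jᶜ, |β k|) ^ 2 := by
  obtain ⟨σ, hdet, hmax⟩ := exists_det_submatrix_ne_zero_and_forall_abs_det_submatrix_le V hV
  have hσ : σ.Injective := fun j j' h ↦ by_contra fun hne ↦ hdet <|
    det_zero_of_column_eq hne fun i ↦ by simp [h]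
  set A := V.submatrix id σ
  set J := univ.map ⟨σ, hσ⟩
  set T := ∑ k ∈ Jᶜ, |β k|
  set b := ∑ k ∈ Jᶜ, β k • V.col k
  set x := -(A.det⁻¹ • cramer A b)
  have hAx : A *ᵥ x = -b := by
    rw [mulVec_neg, mulVec_smul, mulVec_cramer, smul_smul, inv_mul_cancel₀ hdet, one_smul]
  have hx : ∀ j, |x j| ≤ T := fun j ↦ by
    have hA : 0 < |A.det| := abs_pos.2 hdet
    calc |x j| = |cramer A b j| / |A.det| := by simp [x, abs_mul, div_eq_inv_mul]
      _ ≤ T := div_le_of_le_mul₀ hA.le (sum_nonneg fun _ _ ↦ abs_nonneg _)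
          (abs_cramer_submatrix_sum_le hmax Jᶜ β j)
  refine ⟨J, by simp [J], Function.extend σ x β, fun k hk ↦ ?_, ?_, ?_⟩
  · exact Function.extend_apply' _ _ _ fun ⟨j, hj⟩ ↦ hk (by simp [J, ← hj])
  · ext i
    have := congrFun hAx i
    simp only [mulVec, dotProduct, Fintype.sum_extend hσ x β (fun k a ↦ V i k * a)] at this ⊢
    rw [show ∑ j, V i (σ j) * x j = -b i from this]
    simp [b, J, Finset.sum_apply, mul_comm]
  · have hxx : ∑ j, x j * x j ≤ Fintype.card m * T ^ 2 := by
      simpa [← sq] using sum_le_sum fun j (_ : j ∈ univ) ↦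
        sq_le_sq' (abs_le.1 (hx j)).1 (abs_le.1 (hx j)).2
    have hββ : ∑ k ∈ Jᶜ, β k * β k ≤ T ^ 2 := by
      simpa [← sq, sq_abs] using sum_sq_le_sq_sum_of_nonneg fun k (_ : k ∈ Jᶜ) ↦ abs_nonneg (β k)
    rw [dotProduct, Fintype.sum_extend hσ x β fun _ a ↦ a * a]
    linarith

end Matrix

theorem OrthonormalBasis.sum_dotProduct_smul {ι n : Type*} [Fintype ι] [Fintype n]
    (b : OrthonormalBasis ι ℝ (EuclideanSpace ℝ n)) (x : n → ℝ) :
    ∑ i, (⇑(b i) ⬝ᵥ x) • ⇑(b i) = x := by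
  simpa [EuclideanSpace.inner_eq_star_dotProduct, dotProduct_comm] using
    congrArg WithLp.ofLp (b.sum_repr' (WithLp.toLp 2 x))

theorem Orthonormal.rank_of_ofLp {m n 𝕜 : Type*} [Fintype m] [Fintype n] [RCLike 𝕜]
    {v : m → EuclideanSpace 𝕜 n} (hv : Orthonormal 𝕜 v) :
    (Matrix.of fun i ↦ (v i).ofLp).rank = Fintype.card m := by
  have hli : LinearIndependent 𝕜 (fun i ↦ (v i).ofLp) :=
    hv.linearIndependent.map' (WithLp.linearEquiv 2 𝕜 (n → 𝕜)).toLinearMap (LinearEquiv.ker _)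
  rw [rank_eq_finrank_span_row, linearIndependent_iff_card_eq_finrank_span.1 hli]
  rfl

namespace Matrix.IsHermitian

variable {n : Type*} [Fintype n] [DecidableEq n] {A : Matrix n n ℝ}

theorem dotProduct_mulVec_le_of_dotProduct_eigenvectorBasis_eq_zero (hA : A.IsHermitian)
    {ε : ℝ} {x : n → ℝ}
    (hx : ∀ i, ε < hA.eigenvalues i → ⇑(hA.eigenvectorBasis i) ⬝ᵥ x = 0) :
    x ⬝ᵥ A *ᵥ x ≤ ε * (x ⬝ᵥ x) := by
  set b := hA.eigenvectorBasis
  set w := fun i ↦ ⇑(b i) ⬝ᵥ x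
  have hexp : ∑ i, w i • ⇑(b i) = x := b.sum_dotProduct_smul x
  have hAx : A *ᵥ x = ∑ i, (hA.eigenvalues i * w i) • ⇑(b i) := by
    conv_lhs => rw [← hexp]
    simp [mulVec_sum, mulVec_smul, hA.mulVec_eigenvectorBasis, smul_smul, mul_comm, b]
  have hquad : x ⬝ᵥ A *ᵥ x = ∑ i, hA.eigenvalues i * w i ^ 2 := by
    rw [hAx, dotProduct_sum]
    refine sum_congr rfl fun i _ ↦ ?_
    rw [dotProduct_smul, smul_eq_mul, dotProduct_comm]
    ring
  have hsq : x ⬝ᵥ x = ∑ i, w i ^ 2 := by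
    nth_rw 2 [← hexp]
    rw [dotProduct_sum]
    refine sum_congr rfl fun i _ ↦ ?_
    rw [dotProduct_smul, smul_eq_mul, dotProduct_comm, sq]
  rw [hquad, hsq, mul_sum]
  refine sum_le_sum fun i _ ↦ ?_
  by_cases h : ε < hA.eigenvalues i
  · simp [w, hx i h]
  · exact mul_le_mul_of_nonneg_right (not_lt.1 h) (sq_nonneg _)

end Matrix.IsHermitian

section GramMatrix

variable {E ι : Type*} [NormedAddCommGroup E] [InnerProductSpace ℝ E] [Fintype ι] [DecidableEq ι]

theorem exists_card_eq_norm_sum_smul_sub_sum_smul_sq_le (φ : ι → E) {ε : ℝ} (hε : 0 ≤ ε)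
    (β : ι → ℝ) :
    ∃ J : Finset ι, #J = #{i | ε < (isHermitian_gram ℝ φ).eigenvalues i} ∧ ∃ γ : ι → ℝ,
      ‖∑ j, β j • φ j - ∑ j ∈ J, γ j • φ j‖ ^ 2 ≤ ε * ((#J + 1) * #Jᶜ * ∑ j, β j ^ 2) := by
  set hG := isHermitian_gram ℝ φ
  set S : Finset ι := {i | ε < hG.eigenvalues i}
  set V : Matrix S ι ℝ := Matrix.of fun i ↦ (hG.eigenvectorBasis i).ofLp
  have hV : V.rank = Fintype.card S :=
    (hG.eigenvectorBasis.orthonormal.comp _ Subtype.val_injective).rank_of_ofLp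
  obtain ⟨J, hJ, δ, hδβ, hVδ, hδδ⟩ := exists_finset_card_eq_forall_notMem_eq_mulVec_eq_zero V hV β
  rw [Fintype.card_coe] at hJ hδδ
  refine ⟨J, hJ, fun j ↦ β j - δ j, ?_⟩
  have hsub : ∑ j, β j • φ j - ∑ j ∈ J, (β j - δ j) • φ j = ∑ j, δ j • φ j := by
    rw [sum_subset J.subset_univ fun k _ hk ↦ by simp [hδβ k hk], ← sum_sub_distrib]
    simp [← sub_smul]
  have hgram : ‖∑ j, δ j • φ j‖ ^ 2 = δ ⬝ᵥ gram ℝ φ *ᵥ δ := by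
    rw [← real_inner_self_eq_norm_sq, ← star_dotProduct_gram_mulVec, star_trivial]
  have horth : ∀ i, ε < hG.eigenvalues i → (hG.eigenvectorBasis i).ofLp ⬝ᵥ δ = 0 :=
    fun i hi ↦ congrFun hVδ ⟨i, by simpa [S] using hi⟩
  have htail : (∑ k ∈ Jᶜ, |β k|) ^ 2 ≤ #Jᶜ * ∑ j, β j ^ 2 := by
    refine sq_sum_le_card_mul_sum_sq.trans (mul_le_mul_of_nonneg_left ?_ (Nat.cast_nonneg _))
    simpa using sum_le_univ_sum_of_nonneg fun k ↦ sq_nonneg (|β k|)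
  calc ‖∑ j, β j • φ j - ∑ j ∈ J, (β j - δ j) • φ j‖ ^ 2 = δ ⬝ᵥ gram ℝ φ *ᵥ δ := by
        rw [hsub, hgram]
    _ ≤ ε * (δ ⬝ᵥ δ) := hG.dotProduct_mulVec_le_of_dotProduct_eigenvectorBasis_eq_zero horth
    _ ≤ ε * ((#J + 1) * #Jᶜ * ∑ j, β j ^ 2) := by
        rw [← hJ] at hδδ
        rw [mul_assoc (_ + 1 : ℝ)]
        exact mul_le_mul_of_nonneg_left (hδδ.trans (by gcongr)) hε

end GramMatrix

theorem fitting_loss_lower_bound_of_eps_rank_general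
    (d n p : ℕ)
    (Ω : Set (EuclideanSpace ℝ (Fin d)))
    (ε C : ℝ) (hε : 0 ≤ ε)
    (φ : Fin n → Lp ℝ 2 (volume.restrict Ω))
    (M : Matrix (Fin n) (Fin n) ℝ)
    (hM : ∀ i j, M i j = ∫ x, (φ i : EuclideanSpace ℝ (Fin d) → ℝ) x *
      (φ j : EuclideanSpace ℝ (Fin d) → ℝ) x ∂(volume.restrict Ω))
    (hHerm : M.IsHermitian)
    (hrank : (Finset.univ.filter (fun i => ε < hHerm.eigenvalues i)).card = p)
    (β : Fin n → ℝ) (hβ : ∑ j, (β j) ^ 2 ≤ C)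
    (un : Lp ℝ 2 (volume.restrict Ω)) (hun : un = ∑ j, β j • φ j)
    (f : Lp ℝ 2 (volume.restrict Ω))
    (Fp : Set (Lp ℝ 2 (volume.restrict Ω)))
    (hFp : Fp = {g | ∃ (J : Finset (Fin n)) (γ : Fin n → ℝ),
      J.card = p ∧ g = ∑ j ∈ J, γ j • φ j}) :
    ‖un - f‖ ≥ Metric.infDist f Fp -
      Real.sqrt (C * ((p : ℝ) + 1) * ((n : ℝ) - p) ^ 2 * ε) := by
  obtain rfl : M = gram ℝ φ := by
    ext i j
    rw [hM, gram_apply, L2.inner_def]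
    simp [mul_comm]
  obtain ⟨J, hJ, γ, hγ⟩ := exists_card_eq_norm_sum_smul_sub_sum_smul_sq_le φ hε β
  have hJp : #J = p := hJ.trans hrank
  have hpn : p ≤ n := hJp ▸ J.card_le_univ.trans_eq (Fintype.card_fin n)
  have hJc : (#Jᶜ : ℝ) = n - p := by
    rw [card_compl, Fintype.card_fin, hJp, Nat.cast_sub hpn]
  have hJc_sq : (#Jᶜ : ℝ) ≤ (#Jᶜ : ℝ) ^ 2 := by exact_mod_cast Nat.le_self_pow two_ne_zero _
  have hdist : ‖un - ∑ j ∈ J, γ j • φ j‖ ≤ √(C * ((p : ℝ) + 1) * ((n : ℝ) - p) ^ 2 * ε) := by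
    refine (abs_norm _).symm.le.trans (Real.abs_le_sqrt (hun ▸ hγ.trans ?_))
    calc ε * ((#J + 1) * #Jᶜ * ∑ j, β j ^ 2) ≤ ε * ((#J + 1) * (#Jᶜ : ℝ) ^ 2 * C) := by gcongr
      _ = C * ((p : ℝ) + 1) * ((n : ℝ) - p) ^ 2 * ε := by rw [hJp, hJc]; ring
  have hmem : ∑ j ∈ J, γ j • φ j ∈ Fp := hFp ▸ ⟨J, γ, hJp, rfl⟩
  rw [ge_iff_le, sub_le_iff_le_add]
  calc Metric.infDist f Fp ≤ dist f (∑ j ∈ J, γ j • φ j) := Metric.infDist_le_dist_of_mem hmem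
    _ ≤ dist un f + dist un (∑ j ∈ J, γ j • φ j) := dist_triangle_left _ _ _
    _ ≤ ‖un - f‖ + √(C * ((p : ℝ) + 1) * ((n : ℝ) - p) ^ 2 * ε) := by
        rw [dist_eq_norm, dist_eq_norm]
        gcongr

/-- function-fitting specialization of the loss lower bound.
If `u_n = ∑_j β_j φ_j` with `‖β‖² ≤ C` and the Gram matrix of `φ_1, …, φ_n ∈ L²(Ω)` has
`ε`-rank `p`, then for `F_p` the set of all `p`-term sub-combinations of the `φ_j`,
`‖u_n − f‖ ≥ dist(f, F_p) − √(C (p+1)(n−p)² ε)`. -/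
theorem fitting_loss_lower_bound_of_eps_rank
    (d n p : ℕ) (hp1 : 1 ≤ p) (hpn : p ≤ n)
    (Ω : Set (EuclideanSpace ℝ (Fin d))) (hΩ : MeasurableSet Ω)
    (ε C : ℝ) (hε : 0 ≤ ε) (hC : 0 < C)
    (φ : Fin n → Lp ℝ 2 (volume.restrict Ω))
    (M : Matrix (Fin n) (Fin n) ℝ)
    (hM : ∀ i j, M i j = ∫ x, (φ i : EuclideanSpace ℝ (Fin d) → ℝ) x *
      (φ j : EuclideanSpace ℝ (Fin d) → ℝ) x ∂(volume.restrict Ω))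
    (hHerm : M.IsHermitian)
    (hrank : (Finset.univ.filter (fun i => ε < hHerm.eigenvalues i)).card = p)
    (β : Fin n → ℝ) (hβ : ∑ j, (β j) ^ 2 ≤ C)
    (un : Lp ℝ 2 (volume.restrict Ω)) (hun : un = ∑ j, β j • φ j)
    (f : Lp ℝ 2 (volume.restrict Ω))
    (Fp : Set (Lp ℝ 2 (volume.restrict Ω)))
    (hFp : Fp = {g | ∃ (J : Finset (Fin n)) (γ : Fin n → ℝ),
      J.card = p ∧ g = ∑ j ∈ J, γ j • φ j}) :
    ‖un - f‖ ≥ Metric.infDist f Fp -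
      Real.sqrt (C * ((p : ℝ) + 1) * ((n : ℝ) - p) ^ 2 * ε) :=
  fitting_loss_lower_bound_of_eps_rank_general d n p Ω ε C hε φ M hM hHerm hrank β hβ un hun f Fp
    hFp
end

section
/- Let γ ≠ 0 and let b_1, …, b_n ∈ ℝ be pairwise distinct. Then the functions φ_j(x) = tanh(γ (x − b_j)), j = 1, …, n, are linearly independent in L²([−1, 1]): if c_1, …, c_n ∈ ℝ satisfy Σ_{j=1}^n c_j tanh(γ(x − b_j)) = 0 for all x ∈ [−1, 1], then c_1 = … = c_n = 0. -/
/-! The substitution `t = exp (2γx)` turns `tanh (γ (x - b_j))` into `(α_j t - 1) / (α_j t + 1)`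
with `α_j = exp (-2γ b_j)`; the `α_j` are positive and pairwise distinct. Clearing denominators,
the relation becomes a polynomial identity in `t` that holds on the infinite set `exp (2γ [-1, 1])`,
hence identically. Evaluated at `t = -1 / α_k`, which kills the `k`-th denominator, every term but
the `k`-th vanishes, and that one is `-2 c_k` times a nonzero product. -/

open Polynomial Finset Function

lemma Real.tanh_eq_exp_two_mul (u : ℝ) :
    Real.tanh u = (Real.exp (2 * u) - 1) / (Real.exp (2 * u) + 1) := by
  have h : Real.exp (2 * u) = Real.exp u * Real.exp u := by rw [← Real.exp_add, two_mul]
  rw [Real.tanh_eq, h, Real.exp_neg]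
  field_simp

lemma Real.tanh_mul_sub_eq (γ x b : ℝ) :
    Real.tanh (γ * (x - b)) =
      (Real.exp (-2 * γ * b) * Real.exp (2 * γ * x) - 1) /
        (Real.exp (-2 * γ * b) * Real.exp (2 * γ * x) + 1) := by
  rw [Real.tanh_eq_exp_two_mul, ← Real.exp_add]
  ring_nf

section CayleySum

variable {K ι : Type*} [Field K] [Fintype ι] [DecidableEq ι]

/-- The numerator of `∑ j, c j * (α j * X - 1) / (α j * X + 1)` over the common denominator
`∏ i, (α i * X + 1)`. -/
noncomputable def cayleySumNumerator (c α : ι → K) : K[X] :=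
  ∑ j, C (c j) * (C (α j) * X - 1) * ∏ i ∈ univ.erase j, (C (α i) * X + 1)

lemma eval_cayleySumNumerator (c α : ι → K) {t : K} (ht : ∀ i, α i * t + 1 ≠ 0) :
    (cayleySumNumerator c α).eval t =
      (∑ j, c j * ((α j * t - 1) / (α j * t + 1))) * ∏ i, (α i * t + 1) := by
  simp only [cayleySumNumerator, eval_finsetSum, eval_prod, eval_mul, eval_sub, eval_add,
    eval_C, eval_X, eval_one, sum_mul]
  refine sum_congr rfl fun j _ => ?_
  rw [← mul_prod_erase univ (fun i => α i * t + 1) (mem_univ j)]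
  field_simp [ht j]

lemma eval_cayleySumNumerator_neg_inv (c α : ι → K) (k : ι) (hk : α k ≠ 0) :
    (cayleySumNumerator c α).eval (-(α k)⁻¹) =
      -2 * c k * ∏ i ∈ univ.erase k, (1 - α i / α k) := by
  simp only [cayleySumNumerator, eval_finsetSum, eval_prod, eval_mul, eval_sub, eval_add,
    eval_C, eval_X, eval_one]
  rw [sum_eq_single k]
  · rw [mul_neg, mul_inv_cancel₀ hk]
    refine congrArg₂ (· * ·) (by ring) (prod_congr rfl fun i _ => ?_)
    ring
  · intro j _ hjk
    rw [prod_eq_zero (mem_erase.mpr ⟨Ne.symm hjk, mem_univ k⟩), mul_zero]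
    rw [mul_neg, mul_inv_cancel₀ hk, neg_add_cancel]
  · exact fun h => absurd (mem_univ k) h

theorem eq_zero_of_sum_cayley_eq_zero [NeZero (2 : K)] {α : ι → K} (hα : Injective α)
    (hα0 : ∀ i, α i ≠ 0) {c : ι → K} {S : Set K} (hS : S.Infinite)
    (hpole : ∀ t ∈ S, ∀ i, α i * t + 1 ≠ 0)
    (h : ∀ t ∈ S, ∑ j, c j * ((α j * t - 1) / (α j * t + 1)) = 0) :
    c = 0 := by
  have hP : cayleySumNumerator c α = 0 := by
    refine eq_zero_of_infinite_isRoot _ (hS.mono fun t ht => ?_)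
    rw [Set.mem_ofPred_eq, IsRoot.def, eval_cayleySumNumerator c α (hpole t ht), h t ht,
      zero_mul]
  funext k
  have hk := eval_cayleySumNumerator_neg_inv c α k (hα0 k)
  rw [hP, eval_zero, eq_comm] at hk
  have hprod : ∏ i ∈ univ.erase k, (1 - α i / α k) ≠ 0 :=
    prod_ne_zero_iff.mpr fun i hi => sub_ne_zero.mpr fun h1 =>
      (ne_of_mem_erase hi) (hα ((div_eq_one_iff_eq (hα0 k)).mp h1.symm))
  simpa [hprod, two_ne_zero] using hk

end CayleySum

/-- Let `γ ≠ 0` and `b_1, …, b_n ∈ ℝ` be pairwise distinct.  Then the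
shifted tanh neurons `φ_j(x) = tanh(γ (x − b_j))` are linearly independent on `[−1, 1]`:
if `∑_j c_j tanh(γ(x − b_j)) = 0` for all `x ∈ [−1, 1]`, then all `c_j = 0`. -/
theorem tanh_shifted_neurons_linearIndependent
    (n : ℕ) (γ : ℝ) (hγ : γ ≠ 0) (b : Fin n → ℝ)
    (hb : ∀ i j, i ≠ j → b i ≠ b j)
    (c : Fin n → ℝ)
    (hc : ∀ x ∈ Set.Icc (-1 : ℝ) 1, ∑ j, c j * Real.tanh (γ * (x - b j)) = 0) :
    ∀ j, c j = 0 := by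
  set α : Fin n → ℝ := fun j => Real.exp (-2 * γ * b j)
  set S := (fun x : ℝ => Real.exp (2 * γ * x)) '' Set.Icc (-1) 1
  have hα : Injective α := fun i j hij => by
    by_contra hne
    exact hb i j hne (mul_left_cancel₀ (by simpa using hγ) (Real.exp_injective hij))
  have hS : S.Infinite :=
    (Set.Icc_infinite (by norm_num)).image
      (Real.exp_injective.comp (mul_right_injective₀ (by simpa using hγ))).injOn
  have hpole : ∀ t ∈ S, ∀ i, α i * t + 1 ≠ 0 := by
    rintro _ ⟨x, -, rfl⟩ i
    positivity
  refine congrFun (eq_zero_of_sum_cayley_eq_zero hα (fun i => (Real.exp_pos _).ne') hS hpole ?_)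
  rintro _ ⟨x, hx, rfl⟩
  simpa only [α, Real.tanh_mul_sub_eq] using hc x hx
end
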